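/- (KKT characterization of the optimal controller) Let r: ℝ^m → ℝ and p: ℝⁿ → ℝ be differentiable strictly convex functions, A ∈ ℝ^{n×n} invertible, B ∈ ℝ^{n×m}, M symmetric. If u* minimizes u ↦ r(u) + p(Ax + Bu) and the envelope condition Aᵀ∇p(Ax + Bu*) = 2Mx holds, then u* = ∇r*(−2 Bᵀ A^{-T} M x), where r* is the Fenchel conjugate of r. -/

import Mathlib

/-!
Stationarity of `u*` gives `∇r(u*) = -Bᵀ ∇p(Ax + Bu*)`. Since `A` is invertible, the envelope
condition says `∇p(Ax + Bu*) = 2 A⁻ᵀ M x`, and applying `∇r* = (∇r)⁻¹` to `∇r(u*)` recovers `u*`.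
-/

open RealInnerProductSpace Matrix

noncomputable def fenchelConj {n : ℕ} (f : EuclideanSpace ℝ (Fin n) → ℝ)
    (y : EuclideanSpace ℝ (Fin n)) : ℝ :=
  ⨆ x, (⟪x, y⟫ - f x)

section FirstOrder

variable {E F : Type*} [NormedAddCommGroup E] [InnerProductSpace ℝ E] [CompleteSpace E]
  [NormedAddCommGroup F] [InnerProductSpace ℝ F] [CompleteSpace F]

theorem IsLocalMin.gradient_eq_neg_adjoint_gradient {r : E → ℝ} {p : F → ℝ} {L : E →L[ℝ] F}
    {c : F} {u : E} (hr : DifferentiableAt ℝ r u) (hp : DifferentiableAt ℝ p (c + L u))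
    (hmin : IsLocalMin (fun v => r v + p (c + L v)) u) :
    gradient r u = -ContinuousLinearMap.adjoint L (gradient p (c + L u)) := by
  have hderiv : HasFDerivAt (fun v => r v + p (c + L v))
      (fderiv ℝ r u + (fderiv ℝ p (c + L u)).comp L) u :=
    hr.hasFDerivAt.add (hp.hasFDerivAt.comp u (L.hasFDerivAt.const_add c))
  have hstat : ∀ v,
      ⟪gradient r u + ContinuousLinearMap.adjoint L (gradient p (c + L u)), v⟫ = ⟪0, v⟫ := by
    intro v
    have := congrArg (· v) (hmin.hasFDerivAt_eq_zero hderiv)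
    simpa [inner_add_left, ContinuousLinearMap.adjoint_inner_left,
      ← hr.hasGradientAt.hasFDerivAt.fderiv, ← hp.hasGradientAt.hasFDerivAt.fderiv] using this
  exact eq_neg_of_add_eq_zero_left (ext_inner_right ℝ hstat)

end FirstOrder

theorem Matrix.adjoint_toEuclideanLin_toContinuousLinearMap {m n : Type*} [Fintype m]
    [DecidableEq m] [Fintype n] [DecidableEq n] (B : Matrix m n ℝ) (w : EuclideanSpace ℝ m) :
    ContinuousLinearMap.adjoint (toEuclideanLin B).toContinuousLinearMap w =
      WithLp.toLp 2 (Bᵀ *ᵥ w) := by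
  rw [← LinearMap.adjoint_toContinuousLinearMap, ← toEuclideanLin_conjTranspose_eq_adjoint,
    conjTranspose_eq_transpose_of_trivial]
  rfl

theorem Matrix.mulVec_eq_of_transpose_mulVec_eq {K m n : Type*} [CommRing K] [Fintype n]
    [DecidableEq n] {A : Matrix n n K} (hA : IsUnit A.det) (C : Matrix m n K) {w v : n → K}
    (h : Aᵀ *ᵥ w = v) : C *ᵥ w = (C * (A⁻¹)ᵀ) *ᵥ v := by
  rw [← h, mulVec_mulVec, Matrix.mul_assoc, ← transpose_mul, mul_nonsing_inv _ hA,
    transpose_one, Matrix.mul_one]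

theorem kkt_optimal_controller_general {n m : ℕ}
    (r : EuclideanSpace ℝ (Fin m) → ℝ) (p : EuclideanSpace ℝ (Fin n) → ℝ)
    (hrdiff : Differentiable ℝ r) (hpdiff : Differentiable ℝ p)
    (A : Matrix (Fin n) (Fin n) ℝ) (hA : IsUnit A.det)
    (B : Matrix (Fin n) (Fin m) ℝ)
    (M : Matrix (Fin n) (Fin n) ℝ)
    (hrgradinv : ∀ v, gradient (fenchelConj r) (gradient r v) = v)
    (x : EuclideanSpace ℝ (Fin n))
    (ustar : EuclideanSpace ℝ (Fin m))
    (hmin : IsMinOn (fun u : EuclideanSpace ℝ (Fin m) =>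
      r u + p ((WithLp.toLp 2 (A *ᵥ x + B *ᵥ u) : EuclideanSpace ℝ (Fin n)))) Set.univ ustar)
    (henv : Aᵀ *ᵥ (gradient p ((WithLp.toLp 2 (A *ᵥ x + B *ᵥ ustar) : EuclideanSpace ℝ (Fin n))) : EuclideanSpace ℝ (Fin n)) = (2 : ℝ) • (M *ᵥ x)) :
    ustar = gradient (fenchelConj r) (WithLp.toLp 2 ((-2 : ℝ) • ((Bᵀ * (A⁻¹)ᵀ * M) *ᵥ x))) := by
  have hstat : gradient r ustar = -ContinuousLinearMap.adjoint
      (toEuclideanLin B).toContinuousLinearMap (gradient p (WithLp.toLp 2 (A *ᵥ x + B *ᵥ ustar))) :=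
    IsLocalMin.gradient_eq_neg_adjoint_gradient (c := WithLp.toLp 2 (A *ᵥ x)) (hrdiff ustar)
      (hpdiff _) (hmin.isLocalMin Filter.univ_mem)
  rw [Matrix.adjoint_toEuclideanLin_toContinuousLinearMap,
    Matrix.mulVec_eq_of_transpose_mulVec_eq hA Bᵀ henv] at hstat
  rw [← hrgradinv ustar, hstat]
  congr 1
  ext i
  simp [Matrix.mulVec_smul, Matrix.mul_assoc, ← Matrix.mulVec_mulVec]

theorem kkt_optimal_controller {n m : ℕ}
    (r : EuclideanSpace ℝ (Fin m) → ℝ) (p : EuclideanSpace ℝ (Fin n) → ℝ)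
    (hrconv : StrictConvexOn ℝ Set.univ r) (hpconv : StrictConvexOn ℝ Set.univ p)
    (hrdiff : Differentiable ℝ r) (hpdiff : Differentiable ℝ p)
    (A : Matrix (Fin n) (Fin n) ℝ) (hA : IsUnit A.det)
    (B : Matrix (Fin n) (Fin m) ℝ)
    (M : Matrix (Fin n) (Fin n) ℝ) (hMsymm : M.IsSymm)
    (hrgradbij : Function.Bijective (gradient r))
    (hrgradinv : ∀ v, gradient (fenchelConj r) (gradient r v) = v)
    (x : EuclideanSpace ℝ (Fin n))
    (ustar : EuclideanSpace ℝ (Fin m))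
    (hmin : IsMinOn (fun u : EuclideanSpace ℝ (Fin m) =>
      r u + p ((WithLp.toLp 2 (A *ᵥ x + B *ᵥ u) : EuclideanSpace ℝ (Fin n)))) Set.univ ustar)
    (henv : Aᵀ *ᵥ (gradient p ((WithLp.toLp 2 (A *ᵥ x + B *ᵥ ustar) : EuclideanSpace ℝ (Fin n))) : EuclideanSpace ℝ (Fin n)) = (2 : ℝ) • (M *ᵥ x)) :
    ustar = gradient (fenchelConj r) (WithLp.toLp 2 ((-2 : ℝ) • ((Bᵀ * (A⁻¹)ᵀ * M) *ᵥ x))) :=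
  kkt_optimal_controller_general r p hrdiff hpdiff A hA B M hrgradinv x ustar hmin henv
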